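/- Let f be a Boolean network of dimension n and ⟨f⟩ its interval-semantics encoding. For every i ∈ {1,…,n}: (2i, 2i−1) is a negative edge of G(⟨f⟩) if and only if there exists x ∈ 𝔹^n such that f_i(x) ≠ x_i. -/

import Mathlib

/-- Asynchronous transition relation of a Boolean network `f`:
`x → y` iff exactly one component `i` differs and `y i = f i x`. -/
def asyncStep {ι : Type} (f : ι → (ι → Bool) → Bool) (x y : ι → Bool) : Prop :=
  ∃ i : ι, x i ≠ y i ∧ (∀ j : ι, j ≠ i → x j = y j) ∧ y i = f i x

/-- Index of the "write" node `2i-1` (0-indexed: `2i`). -/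
def wIdx {n : ℕ} (i : Fin n) : Fin (2 * n) := ⟨2 * i.val, by have := i.isLt; omega⟩

/-- Index of the "read" node `2i` (0-indexed: `2i+1`). -/
def rIdx {n : ℕ} (i : Fin n) : Fin (2 * n) := ⟨2 * i.val + 1, by have := i.isLt; omega⟩

/-- `γ : 𝔹^{2n} → 𝔹^n`, projection on read nodes. -/
def gam {n : ℕ} (z : Fin (2 * n) → Bool) : Fin n → Bool := fun i => z (rIdx i)

/-- `α : 𝔹^n → 𝔹^{2n}`, consistent configuration. -/
def alph {n : ℕ} (x : Fin n → Bool) : Fin (2 * n) → Bool :=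
  fun k => x ⟨k.val / 2, by have := k.isLt; omega⟩

/-- Interval-semantics encoding `⟨f⟩` of a Boolean network `f`. -/
def encode {n : ℕ} (f : Fin n → (Fin n → Bool) → Bool) :
    Fin (2 * n) → (Fin (2 * n) → Bool) → Bool := fun k z =>
  let i : Fin n := ⟨k.val / 2, by have := k.isLt; omega⟩
  if k.val % 2 = 0 then
    (f i (gam z) && (!(z (rIdx i)) || z (wIdx i))) || (!(z (rIdx i)) && z (wIdx i))
  else
    z (wIdx i)

/-- Positive edge `(j,i)` of the influence graph `G(f)`. -/
def posEdge {ι : Type} (f : ι → (ι → Bool) → Bool) (j i : ι) : Prop :=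
  ∃ x y : ι → Bool, (∀ k : ι, k ≠ j → x k = y k) ∧ x j = false ∧ y j = true ∧
    f i x = false ∧ f i y = true

/-- Negative edge `(j,i)` of the influence graph `G(f)`. -/
def negEdge {ι : Type} (f : ι → (ι → Bool) → Bool) (j i : ι) : Prop :=
  ∃ x y : ι → Bool, (∀ k : ι, k ≠ j → x k = y k) ∧ x j = false ∧ y j = true ∧
    f i x = true ∧ f i y = false

/-! With `r` and `w` the read and write nodes of `i`, the write node updates to `f_i(γ z) ∨ w`
when `r = 0` and to `f_i(γ z) ∧ w` when `r = 1`. Raising `r` therefore turns it from `1` to `0`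
exactly when `w = 1` and `f_i` vanishes at a point with `x_i = 1`, or `w = 0` and `f_i` is `1`
at a point with `x_i = 0`; the read nodes and `w` can be chosen freely, e.g. from `alph x`. -/

open Function

theorem negEdge_iff_exists_update {ι : Type} [DecidableEq ι] (g : ι → (ι → Bool) → Bool)
    (j k : ι) :
    negEdge g j k ↔ ∃ x, g k (update x j false) = true ∧ g k (update x j true) = false := by
  constructor
  · rintro ⟨x, y, hxy, hx, hy, hgx, hgy⟩
    have hx' : update x j false = x := by rw [← hx, update_eq_self]
    have hy' : update x j true = y := by
      funext k
      by_cases hk : k = j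
      · subst hk; rw [update_self, hy]
      · rw [update_of_ne hk, hxy k hk]
    exact ⟨x, by rw [hx']; exact hgx, by rw [hy']; exact hgy⟩
  · rintro ⟨x, h0, h1⟩
    refine ⟨update x j false, update x j true, fun k hk => ?_, update_self .., update_self .., h0, h1⟩
    rw [update_of_ne hk, update_of_ne hk]

theorem exists_apply_ne_self_iff {ι : Type} [DecidableEq ι] (h : (ι → Bool) → Bool) (i : ι) :
    (∃ x, h x ≠ x i) ↔ ∃ x, h (update x i false) = true ∨ h (update x i true) = false := by
  constructor
  · rintro ⟨x, hx⟩
    refine ⟨x, ?_⟩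
    cases hxi : x i
    · left; rw [← hxi, update_eq_self]; simpa [hxi] using hx
    · right; rw [← hxi, update_eq_self]; simpa [hxi] using hx
  · rintro ⟨x, hx | hx⟩
    · exact ⟨update x i false, by simp [hx]⟩
    · exact ⟨update x i true, by simp [hx]⟩

section Encoding

variable {n : ℕ}

theorem rIdx_injective : Injective (rIdx (n := n)) := by
  intro a b h
  have := congrArg Fin.val h
  simp only [rIdx] at this
  exact Fin.ext (by omega)

theorem wIdx_ne_rIdx (i j : Fin n) : wIdx i ≠ rIdx j := by
  intro h
  have := congrArg Fin.val h
  simp only [wIdx, rIdx] at this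
  omega

theorem gam_alph (x : Fin n → Bool) : gam (alph x) = x := by
  funext j
  simp only [gam, alph, rIdx]
  congr 1
  exact Fin.ext (by simp only; omega)

theorem gam_update_rIdx (z : Fin (2 * n) → Bool) (i : Fin n) (b : Bool) :
    gam (update z (rIdx i) b) = update (gam z) i b := by
  funext j
  simp only [gam, update_apply, rIdx_injective.eq_iff]

theorem gam_update_wIdx (z : Fin (2 * n) → Bool) (i : Fin n) (b : Bool) :
    gam (update z (wIdx i) b) = gam z := by
  funext j
  simp only [gam, update_of_ne (wIdx_ne_rIdx i j).symm]

theorem encode_wIdx (f : Fin n → (Fin n → Bool) → Bool) (i : Fin n) (z : Fin (2 * n) → Bool) :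
    encode f (wIdx i) z =
      ((f i (gam z) && (!(z (rIdx i)) || z (wIdx i))) || (!(z (rIdx i)) && z (wIdx i))) := by
  have hdiv : (⟨(wIdx i).val / 2, by have := (wIdx i).isLt; omega⟩ : Fin n) = i :=
    Fin.ext (by simp only [wIdx]; omega)
  have hmod : (wIdx i).val % 2 = 0 := by simp only [wIdx]; omega
  simp only [encode, hdiv, if_pos hmod]

theorem encode_wIdx_update_rIdx_false (f : Fin n → (Fin n → Bool) → Bool) (i : Fin n)
    (z : Fin (2 * n) → Bool) :
    encode f (wIdx i) (update z (rIdx i) false) = (f i (update (gam z) i false) || z (wIdx i)) := by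
  rw [encode_wIdx, gam_update_rIdx, update_self, update_of_ne (wIdx_ne_rIdx i i)]
  cases f i (update (gam z) i false) <;> cases z (wIdx i) <;> rfl

theorem encode_wIdx_update_rIdx_true (f : Fin n → (Fin n → Bool) → Bool) (i : Fin n)
    (z : Fin (2 * n) → Bool) :
    encode f (wIdx i) (update z (rIdx i) true) = (f i (update (gam z) i true) && z (wIdx i)) := by
  rw [encode_wIdx, gam_update_rIdx, update_self, update_of_ne (wIdx_ne_rIdx i i)]
  cases f i (update (gam z) i true) <;> cases z (wIdx i) <;> rfl

end Encoding

/-- `(2i, 2i−1)` is a negative edge of `G(⟨f⟩)` iff there exists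
`x` with `f_i(x) ≠ x_i`. -/
theorem neg_read_write_iff {n : ℕ} (f : Fin n → (Fin n → Bool) → Bool) (i : Fin n) :
    negEdge (encode f) (rIdx i) (wIdx i) ↔ ∃ x : Fin n → Bool, f i x ≠ x i := by
  rw [negEdge_iff_exists_update, exists_apply_ne_self_iff]
  simp only [encode_wIdx_update_rIdx_false, encode_wIdx_update_rIdx_true]
  constructor
  · rintro ⟨z, h0, h1⟩
    refine ⟨gam z, ?_⟩
    cases hw : z (wIdx i) <;> simp_all
  · rintro ⟨x, hx⟩
    have hz (w : Bool) : gam (update (alph x) (wIdx i) w) = x := by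
      rw [gam_update_wIdx, gam_alph]
    rcases hx with hx | hx
    · exact ⟨update (alph x) (wIdx i) false, by simp [hz, hx]⟩
    · exact ⟨update (alph x) (wIdx i) true, by simp [hz, hx]⟩
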